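/- arXiv:1903.03447 — 2 statements merged into one kernel-verified Lean document; each statement's English description precedes it below -/
import Mathlib

section
/- Let λ₁,…,λ_p be distinct positive reals, λ = (λ₁,…,λ_p)ᵀ, Λ = diag(λ), √λ the entrywise square root, and n a positive real. Let ζ₁ ≤ … ≤ ζ_p be the eigenvalues of the symmetric matrix Λ − (1/n)√λ√λᵀ, and let m(z) = (1/p) Σᵢ 1/(λᵢ − z). Then for every z ∈ ℂ with z ∉ {λ₁,…,λ_p}, 1 − p/n − (p/n) z m(z) = ∏_{i=1}^p (z − ζᵢ) / ∏_{i=1}^p (z − λᵢ); in particular the zeros of z ↦ 1 − p/n − (p/n) z m(z) are exactly ζ₁,…,ζ_p, and consequently z/(1 − p/n − (p/n) z m(z)) = z · ∏ᵢ (z − λᵢ) / ∏ᵢ (z − ζᵢ). -/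
/-!
Write `Λ - n⁻¹ √λ √λᵀ` as a diagonal matrix minus a rank-one matrix. Off the spectrum of `Λ` the
matrix determinant lemma gives `det (z - M) = ∏ᵢ (z - λᵢ) · (1 + n⁻¹ ∑ᵢ λᵢ / (z - λᵢ))`, and the
second factor is exactly `1 - p/n - (p/n) z m(z)`. Clearing denominators yields the polynomial
identity `∏ᵢ (z - ζᵢ) = ∏ᵢ (z - λᵢ) + n⁻¹ ∑ᵢ λᵢ ∏_{k ≠ i} (z - λₖ)`, valid for every `z`. At
`z = λⱼ` only the `j`-th summand survives, and it is nonzero because the `λ`'s are distinct and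
positive, so the numerator and the denominator of the rational form have no common root.
-/

open Finset Matrix Polynomial
open scoped BigOperators

theorem Finset.prod_add_sum_mul_prod_erase {K ι : Type*} [Field K] [Fintype ι] [DecidableEq ι]
    {d : ι → K} (hd : ∀ i, d i ≠ 0) (w : ι → K) :
    ∏ i, d i + ∑ i, w i * ∏ k ∈ univ.erase i, d k = (∏ i, d i) * (1 + ∑ i, w i / d i) := by
  have h : ∀ i, ∏ k ∈ univ.erase i, d k = (∏ k, d k) / d i := fun i => by
    rw [eq_div_iff (hd i), prod_erase_mul _ _ (mem_univ i)]
  simp only [h, mul_add, mul_one, mul_sum]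
  congr 1
  refine sum_congr rfl fun i _ => ?_
  ring

theorem Finset.sum_mul_prod_erase_sub_eq_single {R ι : Type*} [CommRing R] [Fintype ι]
    [DecidableEq ι] (d w : ι → R) (j : ι) :
    ∑ i, w i * ∏ k ∈ univ.erase i, (d j - d k) = w j * ∏ k ∈ univ.erase j, (d j - d k) :=
  sum_eq_single j (fun i _ hij => by
    rw [prod_eq_zero (mem_erase.2 ⟨Ne.symm hij, mem_univ j⟩) (sub_self _), mul_zero])
    (fun hj => absurd (mem_univ j) hj)

theorem ne_of_forall_prod_sub_eq_prod_sub_add {K ι : Type*} [Field K] [Fintype ι]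
    [DecidableEq ι] {ζ d w : ι → K} (hd : Function.Injective d) (hw : ∀ i, w i ≠ 0)
    (h : ∀ z, ∏ i, (z - ζ i) = ∏ i, (z - d i) + ∑ i, w i * ∏ k ∈ univ.erase i, (z - d k))
    (i j : ι) : ζ i ≠ d j := by
  intro hij
  have hdj := h (d j)
  rw [prod_eq_zero (mem_univ i) (by rw [hij, sub_self]), prod_eq_zero (mem_univ j) (sub_self _),
    zero_add, sum_mul_prod_erase_sub_eq_single] at hdj
  refine mul_ne_zero (hw j) (prod_ne_zero_iff.2 fun k hk => ?_) hdj.symm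
  exact sub_ne_zero.2 fun hjk => (mem_erase.1 hk).1 (hd hjk).symm

theorem Matrix.det_diagonal_add_vecMulVec {K ι : Type*} [Field K] [Fintype ι] [DecidableEq ι]
    {d : ι → K} (hd : ∀ i, d i ≠ 0) (u v : ι → K) :
    (diagonal d + vecMulVec u v).det = ∏ i, d i + ∑ i, u i * v i * ∏ k ∈ univ.erase i, d k := by
  have hfactor : diagonal d + vecMulVec u v =
      diagonal d * (1 + replicateCol Unit (fun i => u i / d i) * replicateRow Unit v) := by
    ext i j
    rw [diagonal_mul, ← vecMulVec_eq]
    simp only [add_apply, vecMulVec_apply, diagonal_apply, one_apply]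
    split_ifs
    · field_simp [hd i]
    · field_simp [hd i]
      ring
  rw [hfactor, det_mul, det_diagonal, det_one_add_replicateCol_mul_replicateRow,
    prod_add_sum_mul_prod_erase hd, dotProduct]
  congr 3 with i
  ring

theorem Matrix.charpoly_diagonal_sub_vecMulVec {K ι : Type*} [Field K] [Infinite K] [Fintype ι]
    [DecidableEq ι] (d u v : ι → K) :
    (diagonal d - vecMulVec u v).charpoly =
      ∏ i, (X - C (d i)) + ∑ i, C (u i * v i) * ∏ k ∈ univ.erase i, (X - C (d k)) := by
  refine eq_of_infinite_eval_eq _ _ ((Set.finite_range d).infinite_compl.mono fun z hz => ?_)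
  have hzd : ∀ i, z - d i ≠ 0 := fun i => sub_ne_zero.2 fun h => hz ⟨i, h.symm⟩
  have hchar : scalar ι z - (diagonal d - vecMulVec u v) =
      diagonal (fun i => z - d i) + vecMulVec u v := by
    rw [scalar_apply, sub_sub_eq_add_sub, add_sub_right_comm, diagonal_sub]
  simp only [Set.mem_ofPred_eq, eval_charpoly, hchar, det_diagonal_add_vecMulVec hzd, eval_add,
    eval_prod, eval_finsetSum, eval_mul, eval_sub, eval_X, eval_C]

theorem one_sub_div_sub_mul_stieltjes_eq {K : Type*} [Field K] {p : ℕ} (hp : (p : K) ≠ 0)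
    (n : K) (d : Fin p → K) {z : K} (hz : ∀ i, z ≠ d i) :
    1 - (p : K) / n - ((p : K) / n) * z * ((p : K)⁻¹ * ∑ i, (d i - z)⁻¹) =
      1 + ∑ i, n⁻¹ * d i / (z - d i) := by
  have hterm : ∀ i, n⁻¹ * d i / (z - d i) = -n⁻¹ - n⁻¹ * z * (d i - z)⁻¹ := fun i => by
    have h₁ : z - d i ≠ 0 := sub_ne_zero.2 (hz i)
    have h₂ : d i - z ≠ 0 := sub_ne_zero.2 (hz i).symm
    field_simp
    ring
  simp only [hterm, sum_sub_distrib, sum_const, card_univ, Fintype.card_fin, nsmul_eq_mul,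
    ← mul_sum]
  field_simp
  ring

theorem rational_form_psi_general
    (par : ℕ) (hpar : 0 < par) (n : ℝ) (hn : 0 < n)
    (lam : Fin par → ℝ) (hlam : ∀ i, 0 < lam i)
    (hdist : Function.Injective lam)
    -- ζ₁ ≤ … ≤ ζ_p : the eigenvalues of the symmetric matrix Λ − (1/n)√λ√λᵀ
    (zeta : Fin par → ℝ)
    (hzeta : (Matrix.diagonal lam -
        n⁻¹ • Matrix.of (fun i j => Real.sqrt (lam i) * Real.sqrt (lam j))).charpoly
      = ∏ i, (X - C (zeta i))) :
    -- the rational form of 1 − p/n − (p/n) z m(z)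
    (∀ z : ℂ, (∀ i, z ≠ (lam i : ℂ)) →
      1 - (par : ℂ) / (n : ℂ) - ((par : ℂ) / (n : ℂ)) * z *
          ((par : ℂ)⁻¹ * ∑ i, ((lam i : ℂ) - z)⁻¹) =
        (∏ i, (z - (zeta i : ℂ))) / (∏ i, (z - (lam i : ℂ)))) ∧
    -- no ζᵢ coincides with any λⱼ, and the zeros are exactly the ζᵢ
    (∀ i j, (zeta i : ℂ) ≠ (lam j : ℂ)) ∧
    (∀ z : ℂ, (∀ i, z ≠ (lam i : ℂ)) →
      ((1 - (par : ℂ) / (n : ℂ) - ((par : ℂ) / (n : ℂ)) * z *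
          ((par : ℂ)⁻¹ * ∑ i, ((lam i : ℂ) - z)⁻¹) = 0) ↔ ∃ i, z = (zeta i : ℂ))) ∧
    -- consequently the rational form of φ
    (∀ z : ℂ, (∀ i, z ≠ (lam i : ℂ)) →
      z / (1 - (par : ℂ) / (n : ℂ) - ((par : ℂ) / (n : ℂ)) * z *
          ((par : ℂ)⁻¹ * ∑ i, ((lam i : ℂ) - z)⁻¹)) =
        z * (∏ i, (z - (lam i : ℂ))) / (∏ i, (z - (zeta i : ℂ)))) := by
  have hrankOne : Matrix.of (fun i j => Real.sqrt (lam i) * Real.sqrt (lam j)) =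
      vecMulVec (fun i => Real.sqrt (lam i)) fun i => Real.sqrt (lam i) := rfl
  have hcharpoly : ∀ z : ℂ, ∏ i, (z - (zeta i : ℂ)) =
      ∏ i, (z - (lam i : ℂ)) +
        ∑ i, ((n : ℂ)⁻¹ * lam i) * ∏ k ∈ univ.erase i, (z - (lam k : ℂ)) := by
    intro z
    rw [hrankOne, ← smul_vecMulVec, charpoly_diagonal_sub_vecMulVec] at hzeta
    simpa [map_prod, map_sum, Real.mul_self_sqrt (hlam _).le, mul_assoc] using
      (congrArg (aeval z) hzeta).symm
  have hpsi : ∀ z : ℂ, (∀ i, z ≠ (lam i : ℂ)) →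
      1 - (par : ℂ) / (n : ℂ) - ((par : ℂ) / (n : ℂ)) * z *
          ((par : ℂ)⁻¹ * ∑ i, ((lam i : ℂ) - z)⁻¹) =
        (∏ i, (z - (zeta i : ℂ))) / (∏ i, (z - (lam i : ℂ))) := by
    intro z hz
    have hzlam : ∀ i, z - (lam i : ℂ) ≠ 0 := fun i => sub_ne_zero.2 (hz i)
    rw [one_sub_div_sub_mul_stieltjes_eq (by exact_mod_cast hpar.ne') _ _ hz, hcharpoly,
      prod_add_sum_mul_prod_erase hzlam,
      mul_div_cancel_left₀ _ (prod_ne_zero_iff.2 fun i _ => hzlam i)]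
  have hzeta_ne_lam : ∀ i j, (zeta i : ℂ) ≠ (lam j : ℂ) :=
    ne_of_forall_prod_sub_eq_prod_sub_add (Complex.ofReal_injective.comp hdist)
      (fun i => mul_ne_zero (by exact_mod_cast (inv_pos.2 hn).ne') (by exact_mod_cast (hlam i).ne'))
      hcharpoly
  refine ⟨hpsi, hzeta_ne_lam, fun z hz => ?_, fun z hz => ?_⟩
  · have hzlam : ∏ i, (z - (lam i : ℂ)) ≠ 0 := prod_ne_zero_iff.2 fun i _ => sub_ne_zero.2 (hz i)
    simp [hpsi z hz, hzlam, prod_eq_zero_iff, sub_eq_zero]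
  · rw [hpsi z hz, div_div_eq_mul_div]

/-- with ζ₁ ≤ … ≤ ζ_p the eigenvalues of Λ − (1/n)√λ√λᵀ (λᵢ distinct and
positive), for z ∉ {λ₁,…,λ_p} one has
1 − p/n − (p/n) z m(z) = ∏ᵢ(z − ζᵢ)/∏ᵢ(z − λᵢ); the zeros of this function are exactly
the ζᵢ, and z/(1 − p/n − (p/n) z m(z)) = z ∏ᵢ(z − λᵢ)/∏ᵢ(z − ζᵢ). -/
theorem rational_form_psi
    (par : ℕ) (hpar : 0 < par) (n : ℝ) (hn : 0 < n)
    (lam : Fin par → ℝ) (hlam : ∀ i, 0 < lam i)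
    (hdist : Function.Injective lam)
    (hmono : Monotone lam)
    -- ζ₁ ≤ … ≤ ζ_p : the eigenvalues of the symmetric matrix Λ − (1/n)√λ√λᵀ
    (zeta : Fin par → ℝ) (hzeta_mono : Monotone zeta)
    (hzeta : (Matrix.diagonal lam -
        n⁻¹ • Matrix.of (fun i j => Real.sqrt (lam i) * Real.sqrt (lam j))).charpoly
      = ∏ i, (X - C (zeta i))) :
    -- the rational form of 1 − p/n − (p/n) z m(z)
    (∀ z : ℂ, (∀ i, z ≠ (lam i : ℂ)) →
      1 - (par : ℂ) / (n : ℂ) - ((par : ℂ) / (n : ℂ)) * z *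
          ((par : ℂ)⁻¹ * ∑ i, ((lam i : ℂ) - z)⁻¹) =
        (∏ i, (z - (zeta i : ℂ))) / (∏ i, (z - (lam i : ℂ)))) ∧
    -- no ζᵢ coincides with any λⱼ, and the zeros are exactly the ζᵢ
    (∀ i j, (zeta i : ℂ) ≠ (lam j : ℂ)) ∧
    (∀ z : ℂ, (∀ i, z ≠ (lam i : ℂ)) →
      ((1 - (par : ℂ) / (n : ℂ) - ((par : ℂ) / (n : ℂ)) * z *
          ((par : ℂ)⁻¹ * ∑ i, ((lam i : ℂ) - z)⁻¹) = 0) ↔ ∃ i, z = (zeta i : ℂ))) ∧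
    -- consequently the rational form of φ
    (∀ z : ℂ, (∀ i, z ≠ (lam i : ℂ)) →
      z / (1 - (par : ℂ) / (n : ℂ) - ((par : ℂ) / (n : ℂ)) * z *
          ((par : ℂ)⁻¹ * ∑ i, ((lam i : ℂ) - z)⁻¹)) =
        z * (∏ i, (z - (lam i : ℂ))) / (∏ i, (z - (zeta i : ℂ)))) :=
  rational_form_psi_general par hpar n hn lam hlam hdist zeta hzeta
end

section
/- Let A and B be p×p real symmetric positive definite matrices. Then tr(A) + tr(B) − 2·tr((A^{1/2} B A^{1/2})^{1/2}) ≥ 0, with equality if and only if A = B. Consequently, for a fixed symmetric positive definite C₂, the map M ↦ D_W(M, C₂) := tr(M) + tr(C₂) − 2·tr((M^{1/2} C₂ M^{1/2})^{1/2}) over symmetric positive definite matrices M attains its minimum value 0 uniquely at M = C₂. -/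
open Matrix
open scoped BigOperators

noncomputable section

section OldSqrt

open scoped ComplexOrder

/-- The square root of a positive semidefinite matrix, as defined in the older Mathlib
(`Matrix.PosSemidef.sqrt`, since removed). -/
def Matrix.PosSemidef.sqrt {n 𝕜 : Type*} [Fintype n] [DecidableEq n] [RCLike 𝕜]
    {A : Matrix n n 𝕜} (hA : A.PosSemidef) : Matrix n n 𝕜 :=
  hA.1.eigenvectorUnitary.1 * diagonal ((↑) ∘ (√·) ∘ hA.1.eigenvalues) *
    (star hA.1.eigenvectorUnitary : Matrix n n 𝕜)

lemma Matrix.PosSemidef.posSemidef_sqrt {n 𝕜 : Type*} [Fintype n] [DecidableEq n] [RCLike 𝕜]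
    {A : Matrix n n 𝕜} (hA : A.PosSemidef) : PosSemidef hA.sqrt := by
  apply PosSemidef.mul_mul_conjTranspose_same
  refine posSemidef_diagonal_iff.mpr fun i ↦ ?_
  rw [Function.comp_apply, RCLike.nonneg_iff]
  constructor
  · simp only [RCLike.ofReal_re]; exact Real.sqrt_nonneg _
  · simp only [RCLike.ofReal_im]

end OldSqrt

section PortSqrt

open scoped ComplexOrder MatrixOrder

lemma Matrix.PosSemidef.sqrt_eq_cfcSqrt {n 𝕜 : Type*} [Fintype n] [DecidableEq n] [RCLike 𝕜]
    {A : Matrix n n 𝕜} (hA : A.PosSemidef) : hA.sqrt = CFC.sqrt A := by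
  rw [CFC.sqrt_eq_cfc, cfc_nnreal_eq_real _ A, hA.1.cfc_eq]
  simp only [IsHermitian.cfc, Unitary.conjStarAlgAut_apply, Matrix.PosSemidef.sqrt]
  congr 3
  funext i
  simp [Real.coe_sqrt, Real.coe_toNNReal', max_eq_left (hA.eigenvalues_nonneg i)]

lemma Matrix.PosSemidef.sqrt_mul_self {n 𝕜 : Type*} [Fintype n] [DecidableEq n] [RCLike 𝕜]
    {A : Matrix n n 𝕜} (hA : A.PosSemidef) : hA.sqrt * hA.sqrt = A := by
  rw [hA.sqrt_eq_cfcSqrt]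
  exact CFC.sqrt_mul_sqrt_self A hA.nonneg

lemma Matrix.PosSemidef.eq_sqrt_of_sq_eq {n 𝕜 : Type*} [Fintype n] [DecidableEq n] [RCLike 𝕜]
    {A B : Matrix n n 𝕜} (hA : A.PosSemidef) (hB : B.PosSemidef) (h : A ^ 2 = B) :
    A = hB.sqrt := by
  rw [hB.sqrt_eq_cfcSqrt, ← h]
  exact (CFC.sqrt_sq A hA.nonneg).symm

end PortSqrt

variable {p : ℕ}

/-- `S * B * S` is positive semidefinite whenever `S` is Hermitian and `B` is psd. -/
lemma posSemidef_conj {S B : Matrix (Fin p) (Fin p) ℝ}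
    (hS : S.IsHermitian) (hB : B.PosSemidef) : (S * B * S).PosSemidef := by
  have h := hB.mul_mul_conjTranspose_same S
  rwa [hS.eq] at h

/-- The squared Bures–Wasserstein distance
`D_W(A,B) = tr A + tr B − 2 tr((A^{1/2} B A^{1/2})^{1/2})` between the centered Gaussian
distributions `N(0,A)` and `N(0,B)`, for `A`, `B` positive semidefinite. -/
def buresWasserstein (A B : Matrix (Fin p) (Fin p) ℝ)
    (hA : A.PosSemidef) (hB : B.PosSemidef) : ℝ :=
  A.trace + B.trace -
    2 * (posSemidef_conj hA.posSemidef_sqrt.isHermitian hB).sqrt.trace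

lemma trace_mul_transpose_self_nonneg' (X : Matrix (Fin p) (Fin p) ℝ) :
    0 ≤ (X * Xᵀ).trace := by
  simp only [Matrix.trace, Matrix.diag, Matrix.mul_apply, Matrix.transpose_apply]
  exact Finset.sum_nonneg fun i _ => Finset.sum_nonneg fun j _ => mul_self_nonneg _

lemma eq_zero_of_trace_mul_transpose_self_eq_zero {X : Matrix (Fin p) (Fin p) ℝ}
    (h : (X * Xᵀ).trace = 0) : X = 0 := by
  ext i j
  simp only [Matrix.trace, Matrix.diag, Matrix.mul_apply, Matrix.transpose_apply] at h
  have h1 := (Finset.sum_eq_zero_iff_of_nonneg (fun i _ =>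
    Finset.sum_nonneg fun j _ => mul_self_nonneg (X i j))).mp h i (Finset.mem_univ i)
  have h2 := (Finset.sum_eq_zero_iff_of_nonneg (fun j _ =>
    mul_self_nonneg (X i j))).mp h1 j (Finset.mem_univ j)
  simpa using mul_self_eq_zero.mp h2

lemma bw_main (A B : Matrix (Fin p) (Fin p) ℝ) (hA : A.PosDef) (hB : B.PosDef) :
    (0 ≤ buresWasserstein A B hA.posSemidef hB.posSemidef) ∧
    (buresWasserstein A B hA.posSemidef hB.posSemidef = 0 ↔ A = B) := by
  classical
  set S := hA.posSemidef.sqrt with hSdef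
  have hS : S.IsHermitian := hA.posSemidef.posSemidef_sqrt.isHermitian
  have hSt : Sᵀ = S := by
    have := hS.eq
    simpa [Matrix.conjTranspose, Matrix.map_id, Matrix.map, Matrix.transpose] using this
  have hSS : S * S = A := hA.posSemidef.sqrt_mul_self
  have hdS : IsUnit S.det := by
    have hdA : (0:ℝ) < A.det := hA.det_pos
    rw [← hSS, Matrix.det_mul] at hdA
    exact isUnit_iff_ne_zero.mpr fun h => by simp [h] at hdA
  have hST : S * S⁻¹ = 1 := Matrix.mul_nonsing_inv S hdS
  have hTS : S⁻¹ * S = 1 := Matrix.nonsing_inv_mul S hdS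
  have hTt : (S⁻¹)ᵀ = S⁻¹ := by rw [Matrix.transpose_nonsing_inv, hSt]
  set C := (posSemidef_conj hA.posSemidef.posSemidef_sqrt.isHermitian hB.posSemidef).sqrt
    with hCdef
  have hCpsd : C.PosSemidef :=
    (posSemidef_conj hA.posSemidef.posSemidef_sqrt.isHermitian hB.posSemidef).posSemidef_sqrt
  have hCt : Cᵀ = C := by
    have := hCpsd.isHermitian.eq
    simpa [Matrix.conjTranspose, Matrix.map_id, Matrix.map, Matrix.transpose] using this
  have hCC : C * C = S * B * S :=
    (posSemidef_conj hA.posSemidef.posSemidef_sqrt.isHermitian hB.posSemidef).sqrt_mul_self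
  have hBeq : B = S⁻¹ * (C * C) * S⁻¹ := by
    rw [hCC]
    have h1 : S⁻¹ * (S * B * S) * S⁻¹ = (S⁻¹ * S) * B * (S * S⁻¹) := by noncomm_ring
    rw [h1, hTS, hST, Matrix.one_mul, Matrix.mul_one]
  set X := S - S⁻¹ * C with hXdef
  have hXt : Xᵀ = S - C * S⁻¹ := by
    rw [hXdef, Matrix.transpose_sub, hSt, Matrix.transpose_mul, hCt, hTt]
  have hkey : buresWasserstein A B hA.posSemidef hB.posSemidef = (X * Xᵀ).trace := by
    have hexp : X * Xᵀ = S * S - S * (C * S⁻¹) - S⁻¹ * C * S + S⁻¹ * (C * C) * S⁻¹ := by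
      rw [hXdef, hXt]
      noncomm_ring
    have ht1 : (S * (C * S⁻¹)).trace = C.trace := by
      rw [Matrix.trace_mul_comm, Matrix.mul_assoc, hTS, Matrix.mul_one]
    have ht2 : (S⁻¹ * C * S).trace = C.trace := by
      rw [Matrix.trace_mul_comm, ← Matrix.mul_assoc, hST, Matrix.one_mul]
    rw [hexp, Matrix.trace_add, Matrix.trace_sub, Matrix.trace_sub, ht1, ht2, hSS, ← hBeq]
    rw [buresWasserstein]
    ring
  refine ⟨by rw [hkey]; exact trace_mul_transpose_self_nonneg' X, ?_, ?_⟩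
  · intro h0
    rw [hkey] at h0
    have hX0 : X = 0 := eq_zero_of_trace_mul_transpose_self_eq_zero h0
    have hSC : S⁻¹ * C = S := by
      have h := sub_eq_zero.mp (hXdef ▸ hX0)
      exact h.symm
    have hCA : C = A := by
      have h5 : S * (S⁻¹ * C) = S * S := by rw [hSC]
      rwa [← Matrix.mul_assoc, hST, Matrix.one_mul, hSS] at h5
    have hBA : B = A := by
      rw [hBeq, hCA, ← hSS]
      calc S⁻¹ * (S * S * (S * S)) * S⁻¹
          = (S⁻¹ * S) * (S * S) * (S * S⁻¹) := by noncomm_ring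
        _ = S * S := by rw [hTS, hST, Matrix.one_mul, Matrix.mul_one]
    exact hBA.symm
  · intro hAB
    subst hAB
    have hsq : A ^ 2 = S * A * S := by
      calc A ^ 2 = (S * S) * (S * S) := by rw [hSS, pow_two]
        _ = S * (S * S) * S := by noncomm_ring
        _ = S * A * S := by rw [hSS]
    have hCA : A = C := hA.posSemidef.eq_sqrt_of_sq_eq _ hsq
    have hX0 : X = 0 := by
      rw [hXdef, ← hCA, ← hSS, ← Matrix.mul_assoc, hTS, Matrix.one_mul, sub_self]
    rw [hkey, hX0]
    simp

/-- for symmetric positive definite `A`, `B`, one has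
`tr A + tr B − 2 tr((A^{1/2} B A^{1/2})^{1/2}) ≥ 0` with equality iff `A = B`;
consequently, for fixed positive definite `C₂ = B`, the map `M ↦ D_W(M, B)` over positive
definite matrices attains its minimum value `0` uniquely at `M = B`. -/
theorem buresWasserstein_nonneg_eq_zero_iff
    (A B : Matrix (Fin p) (Fin p) ℝ) (hA : A.PosDef) (hB : B.PosDef) :
    (0 ≤ buresWasserstein A B hA.posSemidef hB.posSemidef) ∧
    (buresWasserstein A B hA.posSemidef hB.posSemidef = 0 ↔ A = B) ∧
    (buresWasserstein B B hB.posSemidef hB.posSemidef = 0) := by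
  obtain ⟨h1, h2⟩ := bw_main A B hA hB
  obtain ⟨_, h4⟩ := bw_main B B hB hB
  exact ⟨h1, h2, h4.mpr rfl⟩
end
end
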